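/- Let N ≥ 1, σ > 0, ψ_m > 0, and let x_1, …, x_N be unit vectors in ℝ³, pairwise satisfying x_a ≠ −x_b, and let v_1, …, v_N ∈ ℝ³. Fix an index i with ‖v_i‖ ≥ ‖v_k‖ for all k, and suppose ψ_{ik} ≥ ψ_m for all k, where ψ_{ik} ≥ 0 are given weights. Then 2 Σ_{k=1}^N (ψ_{ik}/N) (⟨R_{x_k→x_i}(v_k), v_i⟩ − ‖v_i‖²) + (2σ/N) Σ_{k=1}^N ⟨x_k − x_i, v_i⟩ ≤ ψ_m · (1/N) Σ_{k=1}^N ‖v_k‖² − (ψ_m/2) ‖v_i‖² + (2σ²/ψ_m) · (1/N) Σ_{k=1}^N ‖x_k − x_i‖². -/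

import Mathlib

/-!
For unit vectors `z₁, z₂` the matrix `R(z₁,z₂)` is an isometry, so by Cauchy–Schwarz
`⟨R_{x_k→x_i} v_k, v_i⟩ ≤ ‖v_k‖‖v_i‖`. Since `‖v_k‖ ≤ ‖v_i‖`, the quantity `‖v_k‖‖v_i‖ − ‖v_i‖²` is
non-positive, so the weight `ψ_{ik}` may be lowered to `ψ_m`, and `2ab ≤ a² + b²` bounds it by
`(‖v_k‖² − ‖v_i‖²)/2`. The drift term `2σ⟨x_k − x_i, v_i⟩` is absorbed by Young's inequality
`2|σ| d m ≤ (ψ_m/2) m² + (2σ²/ψ_m) d²`. Averaging these termwise bounds over `k` gives the estimate.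
-/

open Matrix Set
open scoped BigOperators

noncomputable section

/-- The Euclidean norm on `ℝ³`, realized as `Fin 3 → ℝ`. -/
def enorm3 (a : Fin 3 → ℝ) : ℝ := Real.sqrt (a ⬝ᵥ a)

/-- The cross product on `ℝ³`. -/
def cross3 (a b : Fin 3 → ℝ) : Fin 3 → ℝ :=
  ![a 1 * b 2 - a 2 * b 1, a 2 * b 0 - a 0 * b 2, a 0 * b 1 - a 1 * b 0]

/-- The unit vector `u = (z₁ × z₂)/‖z₁ × z₂‖`. -/
def uvec3 (z₁ z₂ : Fin 3 → ℝ) : Fin 3 → ℝ := (enorm3 (cross3 z₁ z₂))⁻¹ • cross3 z₁ z₂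

/-- The rotation matrix `R(z₁,z₂) = ⟨z₁,z₂⟩ I + z₂ z₁ᵀ − z₁ z₂ᵀ + (1 − ⟨z₁,z₂⟩) u uᵀ`. -/
def rotMatrix (z₁ z₂ : Fin 3 → ℝ) : Matrix (Fin 3) (Fin 3) ℝ :=
  (z₁ ⬝ᵥ z₂) • (1 : Matrix (Fin 3) (Fin 3) ℝ)
    + vecMulVec z₂ z₁ - vecMulVec z₁ z₂
    + (1 - z₁ ⬝ᵥ z₂) • vecMulVec (uvec3 z₁ z₂) (uvec3 z₁ z₂)

/-- `R_{z₁→z₂}(v)`, with the convention `R_{z→z} = I`. -/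
def rotApply (z₁ z₂ v : Fin 3 → ℝ) : Fin 3 → ℝ :=
  if z₁ = z₂ then v else (rotMatrix z₁ z₂).mulVec v

lemma cross3_eq_crossProduct (a b : Fin 3 → ℝ) : cross3 a b = a ⨯₃ b := rfl

lemma enorm3_eq_norm (a : Fin 3 → ℝ) : enorm3 a = ‖WithLp.toLp 2 a‖ := by
  rw [norm_eq_sqrt_real_inner, EuclideanSpace.inner_toLp_toLp, star_trivial, enorm3]

lemma enorm3_nonneg (a : Fin 3 → ℝ) : 0 ≤ enorm3 a := Real.sqrt_nonneg _

lemma enorm3_sq (a : Fin 3 → ℝ) : enorm3 a ^ 2 = a ⬝ᵥ a := by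
  rw [enorm3_eq_norm, ← real_inner_self_eq_norm_sq, EuclideanSpace.inner_toLp_toLp, star_trivial]

lemma abs_dotProduct_le_enorm3_mul (a b : Fin 3 → ℝ) : |a ⬝ᵥ b| ≤ enorm3 a * enorm3 b := by
  simpa [enorm3_eq_norm, EuclideanSpace.inner_toLp_toLp, dotProduct_comm]
    using abs_real_inner_le_norm (WithLp.toLp 2 a) (WithLp.toLp 2 b)

lemma dotProduct_le_enorm3_mul (a b : Fin 3 → ℝ) : a ⬝ᵥ b ≤ enorm3 a * enorm3 b :=
  (le_abs_self _).trans (abs_dotProduct_le_enorm3_mul a b)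

lemma enorm3_congr {a b : Fin 3 → ℝ} (h : a ⬝ᵥ a = b ⬝ᵥ b) : enorm3 a = enorm3 b := by
  rw [enorm3, enorm3, h]

lemma sq_dotProduct_crossProduct (z₁ z₂ v : Fin 3 → ℝ) :
    ((z₁ ⨯₃ z₂) ⬝ᵥ v) ^ 2 = (z₁ ⬝ᵥ z₁) * (z₂ ⬝ᵥ z₂) * (v ⬝ᵥ v)
      + 2 * (z₁ ⬝ᵥ z₂) * (z₁ ⬝ᵥ v) * (z₂ ⬝ᵥ v)
      - (z₁ ⬝ᵥ z₁) * (z₂ ⬝ᵥ v) ^ 2 - (z₂ ⬝ᵥ z₂) * (z₁ ⬝ᵥ v) ^ 2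
      - (z₁ ⬝ᵥ z₂) ^ 2 * (v ⬝ᵥ v) := by
  simp only [dotProduct, crossProduct, LinearMap.mk₂_apply, Fin.sum_univ_three, cons_val_zero,
    cons_val_one, cons_val]
  ring

lemma rotMatrix_mulVec (z₁ z₂ v : Fin 3 → ℝ) :
    rotMatrix z₁ z₂ *ᵥ v = (z₁ ⬝ᵥ z₂) • v + (z₁ ⬝ᵥ v) • z₂ - (z₂ ⬝ᵥ v) • z₁
      + ((1 - z₁ ⬝ᵥ z₂) * ((z₁ ⨯₃ z₂) ⬝ᵥ v) / ((z₁ ⨯₃ z₂) ⬝ᵥ (z₁ ⨯₃ z₂))) • (z₁ ⨯₃ z₂) := by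
  have hsq : (enorm3 (z₁ ⨯₃ z₂))⁻¹ * (enorm3 (z₁ ⨯₃ z₂))⁻¹
      = ((z₁ ⨯₃ z₂) ⬝ᵥ (z₁ ⨯₃ z₂))⁻¹ := by
    rw [← mul_inv, ← sq, enorm3_sq]
  simp only [rotMatrix, uvec3, cross3_eq_crossProduct, add_mulVec, sub_mulVec, smul_mulVec,
    one_mulVec, vecMulVec_mulVec, op_smul_eq_smul, smul_dotProduct, smul_smul, smul_eq_mul]
  congr 2
  rw [div_eq_mul_inv, ← hsq]
  ring

lemma dotProduct_self_rotMatrix_mulVec {z₁ z₂ : Fin 3 → ℝ} (h₁ : z₁ ⬝ᵥ z₁ = 1)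
    (h₂ : z₂ ⬝ᵥ z₂ = 1) (v : Fin 3 → ℝ) :
    (rotMatrix z₁ z₂ *ᵥ v) ⬝ᵥ (rotMatrix z₁ z₂ *ᵥ v) = v ⬝ᵥ v := by
  have hgram := sq_dotProduct_crossProduct z₁ z₂ v
  rw [h₁, h₂] at hgram
  have hnn : (z₁ ⨯₃ z₂) ⬝ᵥ (z₁ ⨯₃ z₂) = 1 - (z₁ ⬝ᵥ z₂) ^ 2 := by
    rw [cross_dot_cross, h₁, h₂, dotProduct_comm z₂ z₁]; ring
  have e₁ : (z₁ ⨯₃ z₂) ⬝ᵥ z₁ = 0 := by rw [dotProduct_comm, dot_self_cross]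
  have e₂ : (z₁ ⨯₃ z₂) ⬝ᵥ z₂ = 0 := by rw [dotProduct_comm, dot_cross_self]
  rw [rotMatrix_mulVec]
  simp only [add_dotProduct, dotProduct_add, sub_dotProduct, dotProduct_sub, smul_dotProduct,
    dotProduct_smul, smul_eq_mul, dot_self_cross, dot_cross_self, e₁, e₂, dotProduct_comm v z₁,
    dotProduct_comm v z₂, dotProduct_comm v (z₁ ⨯₃ z₂), dotProduct_comm z₂ z₁, h₁, h₂]
  set s := (z₁ ⨯₃ z₂) ⬝ᵥ (z₁ ⨯₃ z₂)
  set w := (z₁ ⨯₃ z₂) ⬝ᵥ v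
  -- `s = 0` (i.e. `z₁ = ±z₂`) forces `w = 0`, so the junk value `s⁻¹ = 0` does no harm.
  have hw : w * (s * s⁻¹) = w := by
    rcases eq_or_ne s 0 with h | h
    · simp [w, dotProduct_self_eq_zero.mp h]
    · rw [mul_inv_cancel₀ h, mul_one]
  linear_combination hgram + (1 - z₁ ⬝ᵥ z₂) ^ 2 * w * s⁻¹ * hw - w ^ 2 * s⁻¹ * hnn + w * hw

lemma dotProduct_self_eq_one {a : Fin 3 → ℝ} (h : enorm3 a = 1) : a ⬝ᵥ a = 1 := by
  rw [← enorm3_sq, h, one_pow]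

lemma enorm3_rotApply {z₁ z₂ : Fin 3 → ℝ} (h₁ : enorm3 z₁ = 1) (h₂ : enorm3 z₂ = 1)
    (v : Fin 3 → ℝ) : enorm3 (rotApply z₁ z₂ v) = enorm3 v := by
  unfold rotApply
  split_ifs
  · rfl
  · exact enorm3_congr <|
      dotProduct_self_rotMatrix_mulVec (dotProduct_self_eq_one h₁) (dotProduct_self_eq_one h₂) v

lemma rotApply_dotProduct_le {z₁ z₂ : Fin 3 → ℝ} (h₁ : enorm3 z₁ = 1) (h₂ : enorm3 z₂ = 1)
    (u w : Fin 3 → ℝ) : rotApply z₁ z₂ u ⬝ᵥ w ≤ enorm3 u * enorm3 w := by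
  simpa only [enorm3_rotApply h₁ h₂] using dotProduct_le_enorm3_mul (rotApply z₁ z₂ u) w

lemma two_abs_mul_mul_le_add_sq {ψ : ℝ} (hψ : 0 < ψ) (σ d m : ℝ) :
    2 * |σ| * (d * m) ≤ ψ / 2 * m ^ 2 + 2 * σ ^ 2 / ψ * d ^ 2 := by
  have hsq := sq_nonneg (ψ * m - 2 * |σ| * d)
  rw [← sq_abs σ]
  field_simp
  nlinarith

lemma maximal_velocity_term_le {ψm ψ σ m n d p q : ℝ} (hψm : 0 < ψm) (hψ : ψm ≤ ψ) (hn : 0 ≤ n)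
    (hnm : n ≤ m) (hp : p ≤ n * m) (hq : |q| ≤ d * m) :
    2 * ψ * (p - m ^ 2) + 2 * σ * q ≤ ψm * n ^ 2 - ψm / 2 * m ^ 2 + 2 * σ ^ 2 / ψm * d ^ 2 := by
  have hψ₀ : 0 ≤ ψ := hψm.le.trans hψ
  have hnm' : n * m - m ^ 2 ≤ 0 := by nlinarith
  have halign : ψ * (p - m ^ 2) ≤ ψm * (n * m - m ^ 2) :=
    calc ψ * (p - m ^ 2) ≤ ψ * (n * m - m ^ 2) := by gcongr
      _ ≤ ψm * (n * m - m ^ 2) := mul_le_mul_of_nonpos_right hψ hnm'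
  have hsq : ψm * (2 * (n * m - m ^ 2)) ≤ ψm * (n ^ 2 - m ^ 2) := by
    gcongr
    nlinarith [sq_nonneg (n - m)]
  have hcs : σ * q ≤ |σ| * (d * m) := by
    calc σ * q ≤ |σ| * |q| := abs_mul σ q ▸ le_abs_self (σ * q)
      _ ≤ |σ| * (d * m) := by gcongr
  linarith [two_abs_mul_mul_le_add_sq hψm σ d m]

theorem maximal_velocity_estimate_general (N : ℕ)
    (σ ψm : ℝ) (hψm : 0 < ψm)
    (x v : Fin N → Fin 3 → ℝ)
    (hx : ∀ a, enorm3 (x a) = 1)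
    (i : Fin N) (hi : ∀ k, enorm3 (v k) ≤ enorm3 (v i))
    (ψw : Fin N → ℝ) (hψwm : ∀ k, ψm ≤ ψw k) :
    2 * ∑ k, ψw k / N * ((rotApply (x k) (x i) (v k)) ⬝ᵥ (v i) - (enorm3 (v i))^2)
      + 2 * σ / N * ∑ k, ((x k - x i) ⬝ᵥ (v i))
    ≤ ψm * ((N : ℝ)⁻¹ * ∑ k, (enorm3 (v k))^2) - ψm / 2 * (enorm3 (v i))^2
      + 2 * σ^2 / ψm * ((N : ℝ)⁻¹ * ∑ k, (enorm3 (x k - x i))^2) := by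
  have hN : (N : ℝ) ≠ 0 := Nat.cast_ne_zero.mpr i.pos.ne'
  have hterm (k : Fin N) :=
    maximal_velocity_term_le (σ := σ) hψm (hψwm k) (enorm3_nonneg (v k)) (hi k)
      (rotApply_dotProduct_le (hx k) (hx i) (v k) (v i))
      (abs_dotProduct_le_enorm3_mul (x k - x i) (v i))
  calc _ = (N : ℝ)⁻¹ * ∑ k, (2 * ψw k * ((rotApply (x k) (x i) (v k)) ⬝ᵥ (v i)
          - (enorm3 (v i))^2) + 2 * σ * ((x k - x i) ⬝ᵥ (v i))) := by
        simp only [Finset.mul_sum, ← Finset.sum_add_distrib]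
        congr 1 with k
        ring
    _ ≤ (N : ℝ)⁻¹ * ∑ k, (ψm * (enorm3 (v k))^2 - ψm / 2 * (enorm3 (v i))^2
          + 2 * σ^2 / ψm * (enorm3 (x k - x i))^2) := by
        have hN₀ : (0 : ℝ) ≤ (N : ℝ)⁻¹ := by positivity
        exact mul_le_mul_of_nonneg_left (Finset.sum_le_sum fun k _ ↦ hterm k) hN₀
    _ = _ := by
        simp only [Finset.sum_add_distrib, Finset.sum_sub_distrib, Finset.sum_const,
          Finset.card_univ, Fintype.card_fin, nsmul_eq_mul, ← Finset.mul_sum]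
        field_simp

/-- Differential inequality for the maximal velocity: if `‖v_i‖` is
maximal and `ψ_{ik} ≥ ψ_m > 0` for all `k`, then
`2 Σ_k (ψ_{ik}/N)(⟨R_{x_k→x_i}(v_k), v_i⟩ − ‖v_i‖²) + (2σ/N) Σ_k ⟨x_k − x_i, v_i⟩
  ≤ ψ_m (1/N) Σ_k ‖v_k‖² − (ψ_m/2)‖v_i‖² + (2σ²/ψ_m)(1/N) Σ_k ‖x_k − x_i‖²`. -/
theorem maximal_velocity_estimate (N : ℕ) (hN : 1 ≤ N)
    (σ ψm : ℝ) (hσ : 0 < σ) (hψm : 0 < ψm)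
    (x v : Fin N → Fin 3 → ℝ)
    (hx : ∀ a, enorm3 (x a) = 1) (hanti : ∀ a b, x a ≠ -(x b))
    (i : Fin N) (hi : ∀ k, enorm3 (v k) ≤ enorm3 (v i))
    (ψw : Fin N → ℝ) (hψw0 : ∀ k, 0 ≤ ψw k) (hψwm : ∀ k, ψm ≤ ψw k) :
    2 * ∑ k, ψw k / N * ((rotApply (x k) (x i) (v k)) ⬝ᵥ (v i) - (enorm3 (v i))^2)
      + 2 * σ / N * ∑ k, ((x k - x i) ⬝ᵥ (v i))
    ≤ ψm * ((N : ℝ)⁻¹ * ∑ k, (enorm3 (v k))^2) - ψm / 2 * (enorm3 (v i))^2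
      + 2 * σ^2 / ψm * ((N : ℝ)⁻¹ * ∑ k, (enorm3 (x k - x i))^2) :=
  maximal_velocity_estimate_general N σ ψm hψm x v hx i hi ψw hψwm
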